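/- arXiv:1603.06082 — 8 statements merged into one kernel-verified Lean document; each statement's English description precedes it below -/
import Mathlib

section
/- If there exists an MDS code over alphabet Fin d of wordlength n ≥ 3 and minimum distance ⌈n/2⌉ + 1 (hence of size d^(⌊n/2⌋)), then there exists an MDS code over Fin d of wordlength n - 1 and minimum distance ⌈(n-1)/2⌉ + 1 (hence of size d^(⌊(n-1)/2⌋)). -/
/-!
Write `n = m + 1` and drop the last coordinate with `Fin.init`; this changes the Hamming
distance of two words by at most one, and not at all when they agree in that coordinate.
For odd `n` the distance `⌈n/2⌉ + 1` exceeds the target `⌈(n-1)/2⌉ + 1` by one, so plain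
puncturing works. For even `n` the two distances coincide, so we first restrict, by
pigeonhole, to the `≥ d ^ (n/2 - 1)` codewords sharing their last symbol, and then puncture.
-/

open Finset

variable {α : Type*} {m δ : ℕ}

theorem injOn_init_of_last_eq {C : Finset (Fin (m + 1) → α)} {a : α}
    (hlast : ∀ x ∈ C, x (Fin.last m) = a) :
    Set.InjOn Fin.init (C : Set (Fin (m + 1) → α)) := by
  intro x hx y hy hxy
  rw [← Fin.snoc_init_self x, ← Fin.snoc_init_self y, hxy, hlast x hx, hlast y hy]

variable [DecidableEq α]

theorem hammingDist_eq_hammingDist_init_add (x y : Fin (m + 1) → α) :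
    hammingDist x y =
      hammingDist (Fin.init x) (Fin.init y) + if x (Fin.last m) = y (Fin.last m) then 0 else 1 := by
  simp only [hammingDist, card_filter, Fin.sum_univ_castSucc, ite_not]
  rfl

theorem hammingDist_le_hammingDist_init_add_one (x y : Fin (m + 1) → α) :
    hammingDist x y ≤ hammingDist (Fin.init x) (Fin.init y) + 1 := by
  rw [hammingDist_eq_hammingDist_init_add]
  split_ifs <;> omega

theorem hammingDist_init_of_last_eq {x y : Fin (m + 1) → α}
    (h : x (Fin.last m) = y (Fin.last m)) :
    hammingDist (Fin.init x) (Fin.init y) = hammingDist x y := by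
  rw [hammingDist_eq_hammingDist_init_add, if_pos h, add_zero]

section Codes

variable {C : Finset (Fin (m + 1) → α)}

theorem injOn_init_of_pairwise_two_le_hammingDist
    (hC : (C : Set (Fin (m + 1) → α)).Pairwise fun x y => 2 ≤ hammingDist x y) :
    Set.InjOn Fin.init (C : Set (Fin (m + 1) → α)) := by
  intro x hx y hy hxy
  by_contra hne
  have hdist := hammingDist_le_hammingDist_init_add_one x y
  rw [hxy, hammingDist_self] at hdist
  have := hC hx hy hne
  omega

theorem pairwise_image_init_of_pairwise
    (hC : (C : Set (Fin (m + 1) → α)).Pairwise fun x y => δ + 1 ≤ hammingDist x y) :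
    ((C.image Fin.init : Finset (Fin m → α)) : Set (Fin m → α)).Pairwise
      fun x y => δ ≤ hammingDist x y := by
  rw [coe_image]
  refine Set.Pairwise.image (hC.mono' fun x y h => ?_)
  have := hammingDist_le_hammingDist_init_add_one x y
  simp only [Function.onFun]
  omega

theorem pairwise_image_init_of_last_eq {a : α} (hlast : ∀ x ∈ C, x (Fin.last m) = a)
    (hC : (C : Set (Fin (m + 1) → α)).Pairwise fun x y => δ ≤ hammingDist x y) :
    ((C.image Fin.init : Finset (Fin m → α)) : Set (Fin m → α)).Pairwise
      fun x y => δ ≤ hammingDist x y := by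
  rw [coe_image, (injOn_init_of_last_eq hlast).pairwise_image]
  intro x hx y hy hne
  simp only [Function.onFun, hammingDist_init_of_last_eq ((hlast x hx).trans (hlast y hy).symm)]
  exact hC hx hy hne

theorem exists_punctured_code
    (hC : (C : Set (Fin (m + 1) → α)).Pairwise fun x y => δ + 2 ≤ hammingDist x y) :
    ∃ C' : Finset (Fin m → α), C'.card = C.card ∧
      (C' : Set (Fin m → α)).Pairwise fun x y => δ + 1 ≤ hammingDist x y :=
  ⟨C.image Fin.init,
    card_image_of_injOn (injOn_init_of_pairwise_two_le_hammingDist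
      (hC.mono' fun _ _ h => by omega)),
    pairwise_image_init_of_pairwise hC⟩

theorem exists_shortened_code [Fintype α] [Nonempty α] {k : ℕ}
    (hC : (C : Set (Fin (m + 1) → α)).Pairwise fun x y => δ ≤ hammingDist x y)
    (hk : Fintype.card α * k ≤ C.card) :
    ∃ C' : Finset (Fin m → α), C'.card = k ∧
      (C' : Set (Fin m → α)).Pairwise fun x y => δ ≤ hammingDist x y := by
  obtain ⟨a, -, hfiber⟩ := exists_le_card_fiber_of_mul_le_card_of_maps_to
    (f := fun x => x (Fin.last m)) (fun x _ => mem_univ _) univ_nonempty hk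
  obtain ⟨D, hDC, hDcard⟩ := exists_subset_card_eq hfiber
  have hlast : ∀ x ∈ D, x (Fin.last m) = a := fun x hx => (mem_filter.mp (hDC hx)).2
  have hD : (D : Set (Fin (m + 1) → α)).Pairwise fun x y => δ ≤ hammingDist x y :=
    hC.mono (coe_subset.mpr (hDC.trans (filter_subset _ _)))
  exact ⟨D.image Fin.init, by rw [card_image_of_injOn (injOn_init_of_last_eq hlast), hDcard],
    pairwise_image_init_of_last_eq hlast hD⟩

end Codes

/-- If an MDS code of wordlength `n ≥ 3` and minimum distance `⌈n/2⌉ + 1`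
(hence of size `d ^ ⌊n/2⌋`) exists over `Fin d`, then an MDS code of wordlength
`n - 1` and minimum distance `⌈(n-1)/2⌉ + 1` (of size `d ^ ⌊(n-1)/2⌋`) exists. -/
theorem mds_code_shorten (d n : ℕ) (hd : 0 < d) (hn : 3 ≤ n)
    (C : Finset (Fin n → Fin d)) (hcard : C.card = d ^ (n / 2))
    (hdist : ∀ w ∈ C, ∀ w' ∈ C, w ≠ w' → (n + 1) / 2 + 1 ≤ hammingDist w w') :
    ∃ C' : Finset (Fin (n - 1) → Fin d), C'.card = d ^ ((n - 1) / 2) ∧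
      ∀ w ∈ C', ∀ w' ∈ C', w ≠ w' → (n - 1 + 1) / 2 + 1 ≤ hammingDist w w' := by
  obtain ⟨m, rfl⟩ : ∃ m, n = m + 1 := ⟨n - 1, by omega⟩
  simp only [Nat.add_sub_cancel]
  rcases Nat.even_or_odd' m with ⟨k, rfl | rfl⟩
  · obtain ⟨C', hcard', hdist'⟩ := exists_punctured_code (δ := k)
      fun w hw w' hw' hne => by have := hdist w hw w' hw' hne; omega
    refine ⟨C', ?_, fun w hw w' hw' hne => by have := hdist' hw hw' hne; omega⟩
    rw [hcard', hcard]
    congr 1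
    omega
  · have : Nonempty (Fin d) := ⟨⟨0, hd⟩⟩
    obtain ⟨C', hcard', hdist'⟩ := exists_shortened_code (k := d ^ k) (δ := k + 2)
      (fun w hw w' hw' hne => by have := hdist w hw w' hw' hne; omega)
      (by rw [Fintype.card_fin, hcard, ← pow_succ']; apply le_of_eq; congr 1; omega)
    refine ⟨C', by rw [hcard']; congr 1; omega,
      fun w hw w' hw' hne => by have := hdist' hw hw' hne; omega⟩
end

section
/- If n ≥ 4 and there exists a code C ⊆ (Fin d)^n of cardinality d^(⌊n/2⌋) in which any two distinct codewords have Hamming distance at least ⌈n/2⌉ + 1, then d ≥ ⌈n/2⌉ + 1. -/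
private theorem filt_card_aux (n m : ℕ) (h : m ≤ n) :
    (Finset.univ.filter fun i : Fin n => m ≤ i.val).card = n - m := by
  have h1 : (Finset.univ.filter fun i : Fin n => i.val < m) = Finset.image (Fin.castLE h) Finset.univ := by
    ext i
    simp only [Finset.mem_filter, Finset.mem_univ, true_and, Finset.mem_image, true_and]
    constructor
    · intro hi; exact ⟨⟨i.val, hi⟩, Fin.ext rfl⟩
    · rintro ⟨j, rfl⟩; exact j.isLt
  have h1' : (Finset.univ.filter fun i : Fin n => i.val < m).card = m := by
    rw [h1, Finset.card_image_of_injective _ (Fin.castLE_injective h), Finset.card_univ, Fintype.card_fin]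
  have h2 := Finset.card_filter_add_card_filter_not (s := (Finset.univ : Finset (Fin n))) (p := fun i : Fin n => i.val < m)
  simp only [not_lt, Finset.card_univ, Fintype.card_fin] at h2
  omega

/-- Necessary condition: if `n ≥ 4` and a code of size `d ^ ⌊n/2⌋` with pairwise
Hamming distance at least `⌈n/2⌉ + 1` exists in `(Fin d)^n`, then `d ≥ ⌈n/2⌉ + 1`. -/
theorem necessary_condition (d n : ℕ) (hd : 2 ≤ d) (hn : 4 ≤ n)
    (C : Finset (Fin n → Fin d)) (hcard : C.card = d ^ (n / 2))
    (hdist : ∀ w ∈ C, ∀ w' ∈ C, w ≠ w' → (n + 1) / 2 + 1 ≤ hammingDist w w') :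
    (n + 1) / 2 + 1 ≤ d := by
  set k := n / 2 with hk
  have hk2 : 2 ≤ k := by omega
  have hkn : k ≤ n := by omega
  have hD : (n + 1) / 2 + 1 = n - k + 1 := by omega
  rw [hD]
  have hdist' : ∀ w ∈ C, ∀ w' ∈ C, w ≠ w' → n - k + 1 ≤ hammingDist w w' := by
    intro w hw w' hw' hne; rw [← hD]; exact hdist w hw w' hw' hne
  clear hdist
  -- hamming distance as a filter card
  have hham : ∀ x y : Fin n → Fin d,
      hammingDist x y = (Finset.univ.filter fun i => x i ≠ y i).card := fun _ _ => rfl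
  -- key counting lemma: if x,y ∈ C are distinct and agree below m (m ≤ k-1), then
  -- the set of agreements at positions ≥ m has card ≤ k - 1 - m
  have key : ∀ x ∈ C, ∀ y ∈ C, x ≠ y → ∀ m, m ≤ k - 1 →
      (∀ j : Fin n, j.val < m → x j = y j) →
      (Finset.univ.filter fun j : Fin n => m ≤ j.val ∧ x j = y j).card ≤ k - 1 - m := by
    intro x hx y hy hne m hm hagree
    have hdle := hdist' x hx y hy hne
    rw [hham] at hdle
    set Ds := Finset.univ.filter fun i : Fin n => x i ≠ y i with hDs
    have hsub : Ds ⊆ Finset.univ.filter fun i : Fin n => m ≤ i.val := by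
      intro i hi
      simp only [hDs, Finset.mem_filter, Finset.mem_univ, true_and] at hi ⊢
      by_contra hlt
      exact hi (hagree i (by omega))
    have htop : (Finset.univ.filter fun i : Fin n => m ≤ i.val).card = n - m :=
      filt_card_aux n m (by omega)
    have hsplit : (Finset.univ.filter fun j : Fin n => m ≤ j.val ∧ x j = y j)
        = (Finset.univ.filter fun i : Fin n => m ≤ i.val) \ Ds := by
      ext i
      simp only [hDs, Finset.mem_filter, Finset.mem_univ, true_and, Finset.mem_sdiff,
        not_not]
    rw [hsplit, Finset.card_sdiff_of_subset hsub, htop]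
    omega
  -- the projection to the first k coordinates
  set π : (Fin n → Fin d) → (Fin k → Fin d) := fun w i => w (Fin.castLE hkn i) with hπ
  have hπval : ∀ (w : Fin n → Fin d) (j : Fin n) (h : j.val < k), w j = π w ⟨j.val, h⟩ := by
    intro w j h
    rfl
  have hinj : Function.Injective (fun c : ↥C => π c.1) := by
    intro c c' h
    by_contra hne
    have hne' : c.1 ≠ c'.1 := fun h' => hne (Subtype.ext h')
    have hagree : ∀ j : Fin n, j.val < k → c.1 j = c'.1 j := by
      intro j hj
      rw [hπval c.1 j hj, hπval c'.1 j hj]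
      simp only at h
      rw [h]
    have hdle := hdist' c.1 c.2 c'.1 c'.2 hne'
    rw [hham] at hdle
    have hsub : (Finset.univ.filter fun i : Fin n => c.1 i ≠ c'.1 i)
        ⊆ Finset.univ.filter fun i : Fin n => k ≤ i.val := by
      intro i hi
      simp only [Finset.mem_filter, Finset.mem_univ, true_and] at hi ⊢
      by_contra hlt
      exact hi (hagree i (by omega))
    have := Finset.card_le_card hsub
    rw [filt_card_aux n k hkn] at this
    omega
  have hbij : Function.Bijective (fun c : ↥C => π c.1) := by
    refine (Fintype.bijective_iff_injective_and_card _).2 ⟨hinj, ?_⟩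
    rw [Fintype.card_coe, hcard]
    simp [hk]
  have hsurj : ∀ p : Fin k → Fin d, ∃ c, c ∈ C ∧ π c = p := by
    intro p
    obtain ⟨c, hc⟩ := hbij.2 p
    exact ⟨c.1, c.2, hc⟩
  choose W hWmem hWπ using hsurj
  have hWval : ∀ (p : Fin k → Fin d) (j : Fin n) (h : j.val < k), W p j = p ⟨j.val, h⟩ := by
    intro p j h
    rw [hπval (W p) j h, hWπ]
  have hWinj : Function.Injective W := by
    intro p q h
    rw [← hWπ p, ← hWπ q, h]
  -- codewords
  set z : Fin d := ⟨0, by omega⟩ with hz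
  set o : Fin d := ⟨1, by omega⟩ with ho
  set pa : Fin d → (Fin k → Fin d) := fun a i => if i.val = k - 1 then a else z with hpa
  set pv : Fin k → Fin d := fun i => if i.val = k - 2 then o else z with hpv
  set w : Fin d → (Fin n → Fin d) := fun a => W (pa a) with hw
  set v : Fin n → Fin d := W pv with hv
  have hpainj : Function.Injective pa := by
    intro a b h
    have := congrFun h ⟨k - 1, by omega⟩
    simpa [hpa] using this
  have hwne : ∀ a b : Fin d, a ≠ b → w a ≠ w b := by
    intro a b hab h
    exact hab (hpainj (hWinj h))
  -- step B: distinct w a, w b differ at every coordinate ≥ k-1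
  have hB : ∀ a b : Fin d, a ≠ b → ∀ j : Fin n, k - 1 ≤ j.val → w a j ≠ w b j := by
    intro a b hab j hj
    have hagree : ∀ j : Fin n, j.val < k - 1 → w a j = w b j := by
      intro j hj
      have hjk : j.val < k := by omega
      show W (pa a) j = W (pa b) j
      rw [hWval (pa a) j hjk, hWval (pa b) j hjk]
      simp only [hpa, Fin.val_mk]
      rw [if_neg (by omega), if_neg (by omega)]
    have hcard0 := key (w a) (hWmem _) (w b) (hWmem _) (hwne a b hab) (k - 1) le_rfl hagree
    intro hEq
    have hmem : j ∈ Finset.univ.filter fun j : Fin n => k - 1 ≤ j.val ∧ w a j = w b j := by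
      simp only [Finset.mem_filter, Finset.mem_univ, true_and]
      exact ⟨hj, hEq⟩
    have := Finset.card_pos.2 ⟨j, hmem⟩
    omega
  -- step C: for j with k-1 ≤ j.val, a ↦ w a j is surjective
  have hC : ∀ j : Fin n, k - 1 ≤ j.val → Function.Surjective (fun a : Fin d => w a j) := by
    intro j hj
    refine Finite.surjective_of_injective ?_
    intro a b h
    by_contra hab
    exact hB a b hab j hj h
  -- step D: v agrees with each w a in at most one coordinate ≥ k-2
  have hvne : ∀ a : Fin d, v ≠ w a := by
    intro a h
    have := congrFun (hWinj h) ⟨k - 2, by omega⟩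
    simp only [hpv, hpa, if_true] at this
    rw [if_neg (by omega)] at this
    exact absurd (congrArg Fin.val this) (by simp [hz, ho])
  have hD2 : ∀ a : Fin d,
      (Finset.univ.filter fun j : Fin n => k - 2 ≤ j.val ∧ v j = w a j).card ≤ 1 := by
    intro a
    have hagree : ∀ j : Fin n, j.val < k - 2 → v j = w a j := by
      intro j hj
      have hjk : j.val < k := by omega
      show W pv j = W (pa a) j
      rw [hWval pv j hjk, hWval (pa a) j hjk]
      simp only [hpv, hpa, Fin.val_mk]
      rw [if_neg (by omega), if_neg (by omega)]
    have := key v (hWmem _) (w a) (hWmem _) (hvne a) (k - 2) (by omega) hagree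
    omega
  -- step E: build injective map from coordinates ≥ k-1 into Fin d
  set s : Finset (Fin n) := Finset.univ.filter fun j : Fin n => k - 1 ≤ j.val with hs
  have hscard : s.card = n - (k - 1) := filt_card_aux n (k - 1) (by omega)
  set f : Fin n → Fin d := fun j =>
    if h : k - 1 ≤ j.val then Function.surjInv (hC j h) (v j) else z with hf
  have hfval : ∀ j : Fin n, k - 1 ≤ j.val → w (f j) j = v j := by
    intro j hj
    rw [hf]
    simp only [dif_pos hj]
    exact Function.surjInv_eq (hC j hj) (v j)
  have hinjOn : Set.InjOn f s := by
    intro j hj j' hj' hEq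
    simp only [hs, Finset.coe_filter, Set.mem_setOf_eq] at hj hj'
    by_contra hne
    have h1 : v j = w (f j) j := (hfval j hj.2).symm
    have h2 : v j' = w (f j) j' := by rw [hEq]; exact (hfval j' hj'.2).symm
    have hsubpair : ({j, j'} : Finset (Fin n)) ⊆
        Finset.univ.filter fun i : Fin n => k - 2 ≤ i.val ∧ v i = w (f j) i := by
      intro i hi
      simp only [Finset.mem_insert, Finset.mem_singleton] at hi
      simp only [Finset.mem_filter, Finset.mem_univ, true_and]
      rcases hi with rfl | rfl
      · exact ⟨by omega, h1⟩
      · exact ⟨by omega, h2⟩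
    have hcard2 : ({j, j'} : Finset (Fin n)).card = 2 := Finset.card_pair hne
    have := Finset.card_le_card hsubpair
    have := hD2 (f j)
    omega
  have hfin : s.card ≤ d := by
    have := Finset.card_le_card_of_injOn f (fun _ _ => Finset.mem_univ _) hinjOn
    simpa using this
  omega
end

section
/- There is no linear MDS code of dimension 3 and length q + 2 over F_q when q is an odd prime power; i.e., L_q(3) ≤ q + 1 for odd prime powers q. -/
/-!
The coordinate functionals of an MDS code of dimension 3 and length `q + 2` form an arc of
`q + 2` points in the projective plane over `𝔽_q`: any three are linearly independent, because a
nonzero codeword vanishes in at most two coordinates. Each of the `q + 1` lines through a point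
`P` of such an arc contains exactly one further point of it, since the other `q + 1` points
already lie on pairwise distinct lines through `P`. Hence, for a point `u` outside the arc, the
lines through `u` partition the arc into pairs, and `q + 2` is even.
-/

open Module Submodule Finset

open scoped LinearAlgebra.Projectivization

namespace Submodule

variable {K V : Type*} [DivisionRing K] [AddCommGroup V] [Module K V]

theorem span_pair_eq_of_mem_of_notMem {a b u : V} (hu : u ∈ span K {a, b})
    (ha : u ∉ span K {a}) : span K {a, u} = span K {a, b} := by
  refine le_antisymm (span_le.mpr (Set.pair_subset_iff.mpr ⟨subset_span (by simp), hu⟩))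
    (span_le.mpr (Set.pair_subset_iff.mpr ⟨subset_span (by simp), ?_⟩))
  rw [Set.pair_comm] at hu ⊢
  exact mem_span_insert_exchange hu ha

/-- Points of `ℙ K (V ⧸ K ∙ P)` are the lines through `P`. -/
theorem mem_span_pair_of_mk_mkQ_eq {P x y : V} {hx : (span K {P}).mkQ x ≠ 0}
    {hy : (span K {P}).mkQ y ≠ 0} (h : Projectivization.mk K _ hx = Projectivization.mk K _ hy) :
    x ∈ span K {P, y} := by
  obtain ⟨a, ha⟩ := (Projectivization.mk_eq_mk_iff' K _ _ hx hy).mp h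
  rw [← map_smul, eq_comm, ← sub_eq_zero, ← map_sub, mkQ_apply, Quotient.mk_eq_zero,
    mem_span_singleton] at ha
  obtain ⟨b, hb⟩ := ha
  exact mem_span_pair.mpr ⟨b, a, by rw [hb]; abel⟩

theorem exists_forall_notMem_span_singleton {ι : Type*} [Finite ι] [Finite K] (v : ι → V)
    (h : Nat.card ι * Nat.card K < Nat.card V) : ∃ u, ∀ i, u ∉ span K {v i} := by
  by_contra! hcover
  have hsurj : Function.Surjective fun p : ι × K => p.2 • v p.1 := fun u => by
    obtain ⟨i, hi⟩ := hcover u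
    obtain ⟨c, hc⟩ := mem_span_singleton.mp hi
    exact ⟨(i, c), hc⟩
  have := Nat.card_le_card_of_surjective _ hsurj
  rw [Nat.card_prod] at this
  omega

end Submodule

theorem Fintype.even_card_of_forall_fiber_eq_pair {ι β : Type*} [Fintype ι] (f : ι → β)
    (h : ∀ i, ∃ j ≠ i, {k | f k = f i} = {i, j}) : Even (Fintype.card ι) := by
  classical
  have hfiber : ∀ b ∈ univ.image f, #{k | f k = b} = 2 := by
    simp only [mem_image, mem_univ, true_and, forall_exists_index, forall_apply_eq_imp_iff]
    intro i
    obtain ⟨j, hji, hj⟩ := h i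
    have hfilter : ({k | f k = f i} : Finset ι) = {i, j} := by
      rw [← coe_inj]
      simpa using hj
    rw [hfilter, card_pair hji.symm]
  rw [← card_univ, card_eq_sum_card_image f, Finset.sum_congr rfl hfiber, sum_const, smul_eq_mul]
  exact even_two.mul_left _

theorem Module.Dual.linearIndependent_of_injective_pi {K V κ : Type*} [Field K] [AddCommGroup V]
    [Module K V] [FiniteDimensional K V] [Fintype κ] [DecidableEq κ] (φ : κ → Dual K V)
    (hκ : Fintype.card κ = finrank K V) (h : Function.Injective (LinearMap.pi φ)) :
    LinearIndependent K φ := by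
  have hsurj := (LinearMap.injective_iff_surjective_of_finrank_eq_finrank
    (by simp [hκ])).mp h
  refine Fintype.linearIndependent_iff.mpr fun g hg m => ?_
  obtain ⟨w, hw⟩ := hsurj (Pi.single m 1)
  have hφw (i : κ) : φ i w = (Pi.single m 1 : κ → K) i := congrFun hw i
  simpa [hφw, Pi.single_apply] using LinearMap.congr_fun hg w

theorem linearIndependent_proj_comp_subtype_of_mds {ι κ F : Type*} [Fintype ι] [Fintype κ]
    [Field F] [DecidableEq F] (L : Submodule F (ι → F))
    (hmds : ∀ w ∈ L, w ≠ 0 → Fintype.card ι + 1 ≤ hammingNorm w + finrank F L)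
    (s : κ → ι) (hs : Function.Injective s) (hκ : Fintype.card κ = finrank F L) :
    LinearIndependent F fun m => (LinearMap.proj (s m) : (ι → F) →ₗ[F] F) ∘ₗ L.subtype := by
  classical
  refine Module.Dual.linearIndependent_of_injective_pi _ hκ
    ((injective_iff_map_eq_zero _).mpr fun w hw => ?_)
  by_contra hw0
  have hvanish (m : κ) : (w : ι → F) (s m) = 0 := congrFun hw m
  have hsupp : hammingNorm (w : ι → F) ≤ #(univ \ univ.image s) := by
    refine card_le_card fun i hi => ?_
    simp only [mem_filter, mem_univ, true_and] at hi
    simp only [mem_sdiff, mem_univ, mem_image, true_and, not_exists]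
    exact fun m hm => hi (hm ▸ hvanish m)
  rw [card_sdiff_of_subset (subset_univ _), card_image_of_injective _ hs, card_univ,
    card_univ] at hsupp
  have := hmds w w.2 (by simpa using hw0)
  have := Fintype.card_le_of_injective s hs
  omega

section Arc

variable (F : Type*) {ι V : Type*} [Field F] [AddCommGroup V] [Module F V]

def IsArc (v : ι → V) : Prop :=
  ∀ s : Fin 3 → ι, Function.Injective s → LinearIndependent F (v ∘ s)

variable {F} {v : ι → V}

theorem IsArc.notMem_span_pair (hv : IsArc F v) {i j k : ι} (hij : i ≠ j) (hik : i ≠ k)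
    (hjk : j ≠ k) : v i ∉ span F {v j, v k} := by
  have hs : Function.Injective ![i, j, k] := by
    intro a b
    fin_cases a <;> fin_cases b <;> simp [hij, hik, hjk, hij.symm, hik.symm, hjk.symm]
  have := (hv _ hs).notMem_span_image (s := {1, 2}) (x := 0) (by decide)
  simpa [Set.image_insert_eq] using this

theorem IsArc.notMem_span_singleton [Fintype ι] (hv : IsArc F v) (hι : 2 < Fintype.card ι)
    {i j : ι} (hij : i ≠ j) : v i ∉ span F {v j} := by
  classical
  obtain ⟨k, -, hk⟩ := exists_mem_notMem_of_card_lt_card (s := {i, j}) (t := univ)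
    (card_le_two.trans_lt hι)
  simp only [mem_insert, mem_singleton, not_or] at hk
  exact fun h => hv.notMem_span_pair hij (Ne.symm hk.1) (Ne.symm hk.2)
    (span_mono (Set.singleton_subset_iff.mpr (Set.mem_insert _ _)) h)

variable [Fintype ι] [Fintype F]

theorem IsArc.exists_mem_span_pair (hV : finrank F V = 3) (hv : IsArc F v)
    (hcard : Fintype.card ι = Fintype.card F + 2) {u : V} (hu : ∀ j, u ∉ span F {v j})
    (i : ι) : ∃ j ≠ i, u ∈ span F {v i, v j} := by
  classical
  by_contra! hsec
  have hι : 2 < Fintype.card ι := by have := Fintype.one_lt_card (α := F); omega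
  have hπ {x : V} (hx : x ∉ span F {v i}) : (span F {v i}).mkQ x ≠ 0 := by simpa using hx
  -- otherwise `u` and the other `q + 1` points of the arc lie on `q + 2` distinct lines through
  -- `v i`, while `ℙ F (V ⧸ F ∙ v i)` has only `q + 1` points
  let g : Option {j // j ≠ i} → ℙ F (V ⧸ span F {v i})
    | none => .mk F _ (hπ (hu i))
    | some j => .mk F _ (hπ (hv.notMem_span_singleton hι j.2))
  have hg : Function.Injective g := by
    rintro (_ | j) (_ | k) h
    · rfl
    · exact absurd (mem_span_pair_of_mk_mkQ_eq h) (hsec k k.2)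
    · exact absurd (mem_span_pair_of_mk_mkQ_eq h.symm) (hsec j j.2)
    · by_contra hjk
      exact hv.notMem_span_pair j.2 (Subtype.coe_ne_coe.mpr (by simpa using hjk)) k.2.symm
        (mem_span_pair_of_mk_mkQ_eq h)
  have := Module.finite_of_finrank_eq_succ hV
  have hvi : v i ≠ 0 := by
    obtain ⟨j, hji⟩ := Fintype.exists_ne_of_one_lt_card (by omega) i
    exact fun h0 => hv.notMem_span_singleton hι hji.symm (h0 ▸ zero_mem _)
  have hrank : finrank F (V ⧸ span F {v i}) = 2 := by
    have := (span F {v i}).finrank_quotient_add_finrank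
    rw [finrank_span_singleton hvi, hV] at this
    omega
  have : Finite (V ⧸ span F {v i}) := Module.finite_of_finite F
  have := Nat.card_le_card_of_injective g hg
  rw [Projectivization.card_of_finrank_two F _ hrank] at this
  simp only [Nat.card_eq_fintype_card, Fintype.card_option, Fintype.card_subtype_compl,
    Fintype.card_subtype_eq] at this
  omega

theorem IsArc.exists_fiber_span_pair_eq_pair (hV : finrank F V = 3) (hv : IsArc F v)
    (hcard : Fintype.card ι = Fintype.card F + 2) {u : V} (hu : ∀ j, u ∉ span F {v j})
    (i : ι) : ∃ j ≠ i, {k | span F {v k, u} = span F {v i, u}} = {i, j} := by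
  obtain ⟨j, hji, hj⟩ := hv.exists_mem_span_pair hV hcard hu i
  have hline_i : span F {v i, u} = span F {v i, v j} := span_pair_eq_of_mem_of_notMem hj (hu i)
  have hline_j : span F {v j, u} = span F {v i, u} := by
    rw [Set.pair_comm] at hj
    rw [hline_i, span_pair_eq_of_mem_of_notMem hj (hu j), Set.pair_comm]
  refine ⟨j, hji, Set.ext fun k => ⟨fun hk => ?_, ?_⟩⟩
  · by_contra! hne
    simp only [Set.mem_insert_iff, Set.mem_singleton_iff, not_or] at hne
    have hk' : v k ∈ span F {v k, u} := subset_span (by simp)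
    rw [hk, hline_i] at hk'
    exact hv.notMem_span_pair hne.1 hne.2 hji.symm hk'
  · rintro (rfl | rfl)
    exacts [rfl, hline_j]

theorem IsArc.even_card_of_card_eq_add_two (hV : finrank F V = 3) (hv : IsArc F v)
    (hcard : Fintype.card ι = Fintype.card F + 2) : Even (Fintype.card F) := by
  by_contra hodd
  rw [Nat.not_even_iff_odd] at hodd
  have hq : 3 ≤ Fintype.card F := by
    have := Fintype.one_lt_card (α := F)
    obtain ⟨m, hm⟩ := hodd
    omega
  have := Module.finite_of_finrank_eq_succ hV
  obtain ⟨u, hu⟩ := exists_forall_notMem_span_singleton (K := F) v (by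
    rw [Module.natCard_eq_pow_finrank (K := F) (V := V), hV, Nat.card_eq_fintype_card,
      Nat.card_eq_fintype_card, hcard, pow_succ, sq]
    exact Nat.mul_lt_mul_of_pos_right (by nlinarith) (by omega))
  have := Fintype.even_card_of_forall_fiber_eq_pair _
    (hv.exists_fiber_span_pair_eq_pair hV hcard hu)
  rw [hcard, Nat.even_add] at this
  exact Nat.not_even_iff_odd.mpr hodd (this.mpr even_two)

end Arc

theorem no_linear_mds_q_plus_two_general (q : ℕ) (F : Type) [Field F] [Fintype F]
    [DecidableEq F] (hF : Fintype.card F = q) (hodd : Odd q)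
    (L : Submodule F (Fin (q + 2) → F))
    (hdim : Module.finrank F L = 3)
    (hlow : ∀ w ∈ L, w ≠ 0 → q ≤ hammingNorm w) :
    False := by
  have harc : IsArc F fun i => (LinearMap.proj i : (Fin (q + 2) → F) →ₗ[F] F) ∘ₗ L.subtype :=
    fun s hs => linearIndependent_proj_comp_subtype_of_mds L
      (fun w hw hw0 => by simpa [hdim] using hlow w hw hw0) s hs (by simp [hdim])
  have hq := harc.even_card_of_card_eq_add_two (by rw [Subspace.dual_finrank_eq, hdim])
    (by simp [hF])
  exact Nat.not_even_iff_odd.mpr hodd (hF ▸ hq)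

/-- There is no linear MDS code of dimension 3 and length `q + 2` over a finite
field with `q` elements when `q` is odd: i.e. no 3-dimensional subspace of
`F_q^(q+2)` with minimum Hamming weight `q + 2 - 3 + 1 = q`. -/
theorem no_linear_mds_q_plus_two (q : ℕ) (F : Type) [Field F] [Fintype F]
    [DecidableEq F] (hF : Fintype.card F = q) (hodd : Odd q)
    (L : Submodule F (Fin (q + 2) → F))
    (hdim : Module.finrank F L = 3)
    (hlow : ∀ w ∈ L, w ≠ 0 → q ≤ hammingNorm w)
    (hattain : ∃ w ∈ L, w ≠ 0 ∧ hammingNorm w = q) :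
    False :=
  no_linear_mds_q_plus_two_general q F hF hodd L hdim hlow
end

section
/- Any set of points in the projective plane over F_q, with q odd, no three of which are collinear, has cardinality at most q + 1. -/
open Projectivization Module Submodule in
lemma arcAux_proj_card_mul (F V : Type*) [Field F] [Fintype F] [AddCommGroup V] [Module F V]
    [Fintype V] [Nontrivial V] :
    Nat.card (Projectivization F V) * (Fintype.card F - 1) = Fintype.card V - 1 := by
  classical
  have e : Projectivization F V × Fˣ ≃ {v : V // v ≠ 0} := by
    refine Equiv.ofBijective (fun x => ⟨(x.2 : F) • x.1.rep, ?_⟩) ⟨?_, ?_⟩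
    · exact smul_ne_zero (Units.ne_zero x.2) x.1.rep_nonzero
    · rintro ⟨x, c⟩ ⟨y, d⟩ h
      simp only [Subtype.mk.injEq] at h
      have hxy : x = y := by
        have := (Projectivization.mk_eq_mk_iff' F x.rep y.rep x.rep_nonzero y.rep_nonzero).2
          ⟨(c : F)⁻¹ * d, by rw [mul_smul, ← h, inv_smul_smul₀ (Units.ne_zero c)]⟩
        rwa [Projectivization.mk_rep, Projectivization.mk_rep] at this
      subst hxy
      have hcd : (c : F) = (d : F) := smul_left_injective F x.rep_nonzero h
      simp [Prod.ext_iff, Units.ext_iff, hcd]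
    · rintro ⟨v, hv⟩
      obtain ⟨a, ha⟩ := Projectivization.exists_smul_eq_mk_rep F v hv
      refine ⟨⟨Projectivization.mk F v hv, a⁻¹⟩, ?_⟩
      simp only [Subtype.mk.injEq]
      rw [← ha, Units.smul_def a, ← mul_smul]
      simp
  have h1 : Nat.card (Projectivization F V × Fˣ) = Nat.card {v : V // v ≠ 0} :=
    Nat.card_eq_of_bijective e e.bijective
  rw [Nat.card_prod] at h1
  have h2 : Nat.card Fˣ = Fintype.card F - 1 := by
    rw [Nat.card_eq_fintype_card, Fintype.card_units]
  have h3 : Nat.card {v : V // v ≠ 0} = Fintype.card V - 1 := by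
    rw [Nat.card_eq_fintype_card]
    rw [Fintype.card_subtype_compl (p := fun v => v = 0)]
    simp
  rw [h2, h3] at h1
  exact h1

open Projectivization Module Submodule in
lemma arcAux_proj_card_rank2 (F V : Type*) [Field F] [Fintype F] [AddCommGroup V] [Module F V]
    [Fintype V] (h2 : finrank F V = 2) :
    Nat.card (Projectivization F V) = Fintype.card F + 1 := by
  haveI : Nontrivial V := Module.nontrivial_of_finrank_pos (R := F) (by omega)
  have hq : 2 ≤ Fintype.card F := Fintype.one_lt_card
  have hcv : Fintype.card V = Fintype.card F ^ 2 := by rw [card_eq_pow_finrank (K := F), h2]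
  have h := arcAux_proj_card_mul F V
  rw [hcv] at h
  set q := Fintype.card F
  have key : (q + 1) * (q - 1) = q ^ 2 - 1 := by
    zify [show 1 ≤ q by omega, show 1 ≤ q ^ 2 from Nat.one_le_pow _ _ (by omega)]
    ring
  rw [← key] at h
  exact Nat.eq_of_mul_eq_mul_right (by omega) h

open Projectivization Module Submodule in
lemma arcAux_proj_card_rank3 (F V : Type*) [Field F] [Fintype F] [AddCommGroup V] [Module F V]
    [Fintype V] (h3 : finrank F V = 3) :
    Nat.card (Projectivization F V) = Fintype.card F * Fintype.card F + Fintype.card F + 1 := by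
  haveI : Nontrivial V := Module.nontrivial_of_finrank_pos (R := F) (by omega)
  have hq : 2 ≤ Fintype.card F := Fintype.one_lt_card
  have hcv : Fintype.card V = Fintype.card F ^ 3 := by rw [card_eq_pow_finrank (K := F), h3]
  have h := arcAux_proj_card_mul F V
  rw [hcv] at h
  set q := Fintype.card F
  have key : (q * q + q + 1) * (q - 1) = q ^ 3 - 1 := by
    zify [show 1 ≤ q by omega, show 1 ≤ q ^ 3 from Nat.one_le_pow _ _ (by omega)]
    ring
  rw [← key] at h
  exact Nat.eq_of_mul_eq_mul_right (by omega) h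

open Projectivization Module Submodule in
lemma arcAux_not_li_of_mem_span_pair {F V : Type*} [Field F] [AddCommGroup V] [Module F V]
    [FiniteDimensional F V] {a b u v w : V}
    (hu : u ∈ span F ({a, b} : Set V)) (hv : v ∈ span F ({a, b} : Set V))
    (hw : w ∈ span F ({a, b} : Set V)) :
    ¬ LinearIndependent F ![u, v, w] := by
  classical
  intro li
  have h3 : finrank F (span F (Set.range ![u, v, w])) = 3 := by
    rw [finrank_span_eq_card li]; simp
  have hle : span F (Set.range ![u, v, w]) ≤ span F ({a, b} : Set V) := by
    rw [span_le]
    rintro - ⟨i, rfl⟩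
    fin_cases i <;> simpa
  have h2 : finrank F (span F ({a, b} : Set V)) ≤ 2 := by
    refine le_trans (finrank_span_le_card _) ?_
    rw [Set.toFinset_insert, Set.toFinset_singleton]
    exact le_trans (Finset.card_insert_le _ _) (by simp)
  have := Submodule.finrank_mono hle
  omega

open Projectivization Module Submodule in
lemma arcAux_rep_ne_span {F V : Type*} [Field F] [AddCommGroup V] [Module F V]
    {x y : Projectivization F V} (hxy : x ≠ y) : x.rep ∉ span F {y.rep} := by
  intro hmem
  obtain ⟨c, hc⟩ := Submodule.mem_span_singleton.1 hmem
  exact hxy (by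
    rw [← x.mk_rep, ← y.mk_rep]
    exact (Projectivization.mk_eq_mk_iff' F _ _ x.rep_nonzero y.rep_nonzero).2 ⟨c, hc⟩)

open Projectivization Module Submodule in
lemma arcAux_quotrank (F : Type) [Field F] [Fintype F] (p : Projectivization F (Fin 3 → F)) :
    finrank F ((Fin 3 → F) ⧸ span F {p.rep}) = 2 := by
  have h := Submodule.finrank_quotient_add_finrank (span F {p.rep})
  rw [finrank_span_singleton p.rep_nonzero, Module.finrank_fin_fun] at h
  omega

open Projectivization Module Submodule in
lemma arcAux_nonempty (F : Type) [Field F] [Fintype F] (p : Projectivization F (Fin 3 → F)) :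
    Nonempty (Projectivization F ((Fin 3 → F) ⧸ span F {p.rep})) := by
  haveI : Nontrivial ((Fin 3 → F) ⧸ span F {p.rep}) :=
    Module.nontrivial_of_finrank_pos (R := F) (by rw [arcAux_quotrank]; omega)
  obtain ⟨v, hv⟩ := exists_ne (0 : (Fin 3 → F) ⧸ span F {p.rep})
  exact ⟨Projectivization.mk F v hv⟩

open Projectivization Module Submodule in
/-- The pencil map: `x ↦` the line `px`, as a point of the projectivized quotient. -/
noncomputable def arcLineMap {F : Type} [Field F] [Fintype F]
    (p x : Projectivization F (Fin 3 → F)) :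
    Projectivization F ((Fin 3 → F) ⧸ span F {p.rep}) :=
  letI := Classical.dec ((span F {p.rep}).mkQ x.rep = 0)
  if h : (span F {p.rep}).mkQ x.rep = 0 then (arcAux_nonempty F p).some
  else Projectivization.mk F ((span F {p.rep}).mkQ x.rep) h

open Projectivization Module Submodule in
lemma arcAux_mkQ_ne {F : Type} [Field F] [Fintype F]
    {p x : Projectivization F (Fin 3 → F)} (hxp : x ≠ p) :
    (span F {p.rep}).mkQ x.rep ≠ 0 := by
  intro h0
  rw [Submodule.mkQ_apply, Submodule.Quotient.mk_eq_zero] at h0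
  exact arcAux_rep_ne_span hxp h0

open Projectivization Module Submodule in
lemma arcLineMap_eq {F : Type} [Field F] [Fintype F]
    {p x : Projectivization F (Fin 3 → F)} (hxp : x ≠ p) :
    arcLineMap p x = Projectivization.mk F ((span F {p.rep}).mkQ x.rep) (arcAux_mkQ_ne hxp) := by
  unfold arcLineMap
  exact dif_neg (arcAux_mkQ_ne hxp)

open Projectivization Module Submodule in
lemma arcLineMap_span {F : Type} [Field F] [Fintype F]
    {p x y : Projectivization F (Fin 3 → F)} (hxp : x ≠ p) (hyp : y ≠ p)
    (h : arcLineMap p x = arcLineMap p y) :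
    x.rep ∈ span F ({p.rep, y.rep} : Set (Fin 3 → F)) := by
  rw [arcLineMap_eq hxp, arcLineMap_eq hyp] at h
  obtain ⟨c, hc⟩ := (Projectivization.mk_eq_mk_iff' F _ _ (arcAux_mkQ_ne hxp)
    (arcAux_mkQ_ne hyp)).1 h
  have h0 : (span F {p.rep}).mkQ (x.rep - c • y.rep) = 0 := by
    rw [map_sub, map_smul, hc, sub_self]
  rw [Submodule.mkQ_apply, Submodule.Quotient.mk_eq_zero] at h0
  obtain ⟨d, hd⟩ := Submodule.mem_span_singleton.1 h0
  have hx : x.rep = d • p.rep + c • y.rep := by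
    rw [hd]; abel
  rw [hx]
  exact add_mem (smul_mem _ _ (subset_span (Set.mem_insert _ _)))
    (smul_mem _ _ (subset_span (by simp)))

/-- Arcs in `PG(2, q)` for odd `q`: any set of points in the projective plane
over a finite field `F` with `q` elements, `q` odd, no three of which are
collinear (i.e. any three distinct points have linearly independent
representatives), has at most `q + 1` points. -/
theorem arc_card_le (q : ℕ) (F : Type) [Field F] [Fintype F] [DecidableEq F]
    (hF : Fintype.card F = q) (hodd : Odd q)
    (A : Finset (Projectivization F (Fin 3 → F)))
    (harc : ∀ x ∈ A, ∀ y ∈ A, ∀ z ∈ A, x ≠ y → x ≠ z → y ≠ z →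
      LinearIndependent F ![x.rep, y.rep, z.rep]) :
    A.card ≤ q + 1 := by
  classical
  have hq2 : 2 ≤ q := hF ▸ Fintype.one_lt_card
  by_contra hcon
  push_neg at hcon
  obtain ⟨B, hBA, hBcard⟩ := Finset.exists_subset_card_eq (s := A) (n := q + 2) (by omega)
  have harcB : ∀ x ∈ B, ∀ y ∈ B, ∀ z ∈ B, x ≠ y → x ≠ z → y ≠ z →
      LinearIndependent F ![x.rep, y.rep, z.rep] :=
    fun x hx y hy z hz => harc x (hBA hx) y (hBA hy) z (hBA hz)
  clear hcon harc hBA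
  -- cardinality of pencils
  have hcard2 : ∀ p : Projectivization F (Fin 3 → F),
      Nat.card (Projectivization F ((Fin 3 → F) ⧸ Submodule.span F {p.rep})) = q + 1 := by
    intro p
    haveI : Fintype ((Fin 3 → F) ⧸ Submodule.span F {p.rep}) := Fintype.ofFinite _
    rw [arcAux_proj_card_rank2 F _ (arcAux_quotrank F p), hF]
  -- surjectivity of the pencil map from B.erase p
  have hsurj : ∀ p ∈ B, ∀ w : Projectivization F ((Fin 3 → F) ⧸ Submodule.span F {p.rep}),
      ∃ x ∈ B.erase p, arcLineMap p x = w := by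
    intro p hp w
    haveI : Fintype (Projectivization F ((Fin 3 → F) ⧸ Submodule.span F {p.rep})) := by
      have : Finite (Projectivization F ((Fin 3 → F) ⧸ Submodule.span F {p.rep})) := by
        unfold Projectivization; infer_instance
      exact Fintype.ofFinite _
    have hinj : Set.InjOn (arcLineMap p) (B.erase p : Set _) := by
      intro x hx y hy hxy
      by_contra hne
      simp only [Finset.coe_erase, Set.mem_diff, Finset.mem_coe, Set.mem_singleton_iff] at hx hy
      have h1 : x.rep ∈ Submodule.span F ({p.rep, y.rep} : Set (Fin 3 → F)) :=
        arcLineMap_span hx.2 hy.2 hxy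
      have h2 : y.rep ∈ Submodule.span F ({p.rep, y.rep} : Set (Fin 3 → F)) :=
        Submodule.subset_span (by simp)
      have h3 : p.rep ∈ Submodule.span F ({p.rep, y.rep} : Set (Fin 3 → F)) :=
        Submodule.subset_span (Set.mem_insert _ _)
      exact arcAux_not_li_of_mem_span_pair h1 h2 h3
        (harcB x hx.1 y hy.1 p hp hne hx.2 hy.2)
    have himg : (B.erase p).image (arcLineMap p) = Finset.univ := by
      apply Finset.eq_univ_of_card
      rw [Finset.card_image_of_injOn hinj, Finset.card_erase_of_mem hp, hBcard,
        ← Nat.card_eq_fintype_card, hcard2 p]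
      omega
    have : w ∈ (B.erase p).image (arcLineMap p) := by rw [himg]; exact Finset.mem_univ w
    simpa using Finset.mem_image.1 this
  -- pick a point outside B
  have hbig : ∃ e : Projectivization F (Fin 3 → F), e ∉ B := by
    haveI : Fintype (Projectivization F (Fin 3 → F)) := by
      have : Finite (Projectivization F (Fin 3 → F)) := by
        unfold Projectivization; infer_instance
      exact Fintype.ofFinite _
    by_contra h
    push_neg at h
    have huniv : (Finset.univ : Finset (Projectivization F (Fin 3 → F))) ⊆ B :=
      fun x _ => h x
    have hcard3 : Nat.card (Projectivization F (Fin 3 → F)) = q * q + q + 1 := by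
      rw [arcAux_proj_card_rank3 F _ (Module.finrank_fin_fun F), hF]
    have := Finset.card_le_card huniv
    rw [Finset.card_univ, ← Nat.card_eq_fintype_card, hcard3, hBcard] at this
    have hqq : 2 * q ≤ q * q := Nat.mul_le_mul_right q hq2
    omega
  obtain ⟨e, he⟩ := hbig
  have hne : ∀ x ∈ B, x ≠ e := fun x hx h => he (h ▸ hx)
  -- count B along fibers of the pencil through e
  haveI : Fintype (Projectivization F ((Fin 3 → F) ⧸ Submodule.span F {e.rep})) := by
    have : Finite (Projectivization F ((Fin 3 → F) ⧸ Submodule.span F {e.rep})) := by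
      unfold Projectivization; infer_instance
    exact Fintype.ofFinite _
  have hfib : B.card = ∑ w ∈ Finset.univ,
      (B.filter (fun x => arcLineMap e x = w)).card :=
    Finset.card_eq_sum_card_fiberwise (fun x _ => Finset.mem_univ _)
  -- every fiber has even cardinality
  have heven : ∀ w, 2 ∣ (B.filter (fun x => arcLineMap e x = w)).card := by
    intro w
    set fib := B.filter (fun x => arcLineMap e x = w) with hfibdef
    -- fiber has at most 2 elements
    have hle2 : fib.card ≤ 2 := by
      by_contra h
      push_neg at h
      obtain ⟨x, hx⟩ := Finset.card_pos.1 (by omega : 0 < fib.card)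
      have : 1 < (fib.erase x).card := by
        rw [Finset.card_erase_of_mem hx]; omega
      obtain ⟨y, hy, z, hz, hyz⟩ := Finset.one_lt_card.1 this
      have hyx := Finset.ne_of_mem_erase hy
      have hzx := Finset.ne_of_mem_erase hz
      have hy' := Finset.mem_of_mem_erase hy
      have hz' := Finset.mem_of_mem_erase hz
      simp only [hfibdef, Finset.mem_filter] at hx hy' hz'
      have h1 : y.rep ∈ Submodule.span F ({e.rep, x.rep} : Set (Fin 3 → F)) :=
        arcLineMap_span (hne y hy'.1) (hne x hx.1) (hy'.2.trans hx.2.symm)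
      have h2 : z.rep ∈ Submodule.span F ({e.rep, x.rep} : Set (Fin 3 → F)) :=
        arcLineMap_span (hne z hz'.1) (hne x hx.1) (hz'.2.trans hx.2.symm)
      have h3 : x.rep ∈ Submodule.span F ({e.rep, x.rep} : Set (Fin 3 → F)) :=
        Submodule.subset_span (by simp)
      exact arcAux_not_li_of_mem_span_pair h1 h2 h3
        (harcB y hy'.1 z hz'.1 x hx.1 hyz hyx hzx)
    -- fiber does not have exactly 1 element
    have hne1 : fib.card ≠ 1 := by
      intro h1
      obtain ⟨p, hp⟩ := Finset.card_eq_one.1 h1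
      have hpfib : p ∈ fib := hp ▸ Finset.mem_singleton_self p
      simp only [hfibdef, Finset.mem_filter] at hpfib
      obtain ⟨hpB, hpw⟩ := hpfib
      have hep : e ≠ p := fun h => he (h ▸ hpB)
      -- use surjectivity of the pencil map through p at the point `line pe`
      obtain ⟨x, hx, hxmap⟩ := hsurj p hpB (arcLineMap p e)
      have hxp := Finset.ne_of_mem_erase hx
      have hxB := Finset.mem_of_mem_erase hx
      have hxspan : x.rep ∈ Submodule.span F ({p.rep, e.rep} : Set (Fin 3 → F)) :=
        arcLineMap_span hxp hep hxmap
      obtain ⟨d, c, hdc⟩ := Submodule.mem_span_pair.1 hxspan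
      have hd0 : d ≠ 0 := by
        rintro rfl
        rw [zero_smul, zero_add] at hdc
        exact arcAux_rep_ne_span (hne x hxB)
          (Submodule.mem_span_singleton.2 ⟨c, hdc⟩)
      -- then x is on the line ep, i.e. in the fiber
      have hxfib : arcLineMap e x = w := by
        rw [← hpw, arcLineMap_eq (hne x hxB), arcLineMap_eq (hne p hpB)]
        apply (Projectivization.mk_eq_mk_iff' F _ _ _ _).2
        refine ⟨d, ?_⟩
        rw [← map_smul, ← hdc, map_add, map_smul, map_smul]
        have he0 : (Submodule.span F {e.rep}).mkQ e.rep = 0 := by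
          rw [Submodule.mkQ_apply, Submodule.Quotient.mk_eq_zero]
          exact Submodule.mem_span_singleton_self _
        rw [he0, smul_zero, add_zero]
      have : x ∈ fib := by
        simp only [hfibdef, Finset.mem_filter]
        exact ⟨hxB, hxfib⟩
      rw [hp, Finset.mem_singleton] at this
      exact hxp this
    interval_cases h : fib.card <;> omega
  have : 2 ∣ B.card := hfib ▸ Finset.dvd_sum (fun w _ => heven w)
  obtain ⟨m, hm⟩ := hodd
  omega
end

section
/- If two distinct codewords of an MDS code C ⊆ (Fin d)^n with minimum distance δ agree on a set of coordinates S, then |S| ≤ n - δ; moreover, for any set S of exactly n - δ + 1 coordinates and any assignment of symbols to S, exactly one codeword of C agrees with that assignment on S. -/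
/-- An MDS code is an orthogonal array of strength `n - δ + 1` and index 1:
two distinct codewords agree on at most `n - δ` coordinates, and for any set
of `n - δ + 1` coordinates and any assignment of symbols there, exactly one
codeword realizes it. -/
theorem mds_orthogonal_array (d n δ : ℕ) (hd : 0 < d)
    (C : Finset (Fin n → Fin d)) (hcard : C.card = d ^ (n - δ + 1))
    (hdist : ∀ w ∈ C, ∀ w' ∈ C, w ≠ w' → δ ≤ hammingDist w w') :
    (∀ w ∈ C, ∀ w' ∈ C, w ≠ w' → ∀ S : Finset (Fin n),
      (∀ i ∈ S, w i = w' i) → S.card ≤ n - δ) ∧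
    (∀ S : Finset (Fin n), S.card = n - δ + 1 → ∀ f : Fin n → Fin d,
      ∃! w, w ∈ C ∧ ∀ i ∈ S, w i = f i) := by
  have key : ∀ w w' : Fin n → Fin d, ∀ S : Finset (Fin n),
      (∀ i ∈ S, w i = w' i) → hammingDist w w' + S.card ≤ n := by
    intro w w' S hS
    have hdisj : Disjoint ({i | w i ≠ w' i} : Finset (Fin n)) S := by
      rw [Finset.disjoint_left]
      intro i hi hiS
      simp only [Finset.mem_filter] at hi
      exact hi.2 (hS i hiS)
    calc hammingDist w w' + S.card
        = (({i | w i ≠ w' i} : Finset (Fin n)) ∪ S).card := by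
          rw [Finset.card_union_of_disjoint hdisj, hammingDist]
      _ ≤ (Finset.univ : Finset (Fin n)).card :=
          Finset.card_le_card (Finset.subset_univ _)
      _ = n := by simp
  have part1 : ∀ w ∈ C, ∀ w' ∈ C, w ≠ w' → ∀ S : Finset (Fin n),
      (∀ i ∈ S, w i = w' i) → S.card ≤ n - δ := by
    intro w hw w' hw' hne S hS
    have h1 := hdist w hw w' hw' hne
    have h2 := key w w' S hS
    omega
  refine ⟨part1, ?_⟩
  intro S hScard f
  have hinj : Set.InjOn (fun (w : Fin n → Fin d) (i : S) => w i.1) ↑C := by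
    intro w hw w' hw' heq
    by_contra hne
    have := part1 w hw w' hw' hne S (fun i hi => congrFun heq ⟨i, hi⟩)
    omega
  have huniv : (C.image fun w (i : S) => w i.1) = Finset.univ := by
    apply Finset.eq_univ_of_card
    rw [Finset.card_image_of_injOn hinj, hcard]
    simp [Fintype.card_fun, hScard]
  have hmem : (fun i : S => f i.1) ∈ C.image fun w (i : S) => w i.1 :=
    huniv ▸ Finset.mem_univ _
  obtain ⟨w, hw, hweq⟩ := Finset.mem_image.mp hmem
  refine ⟨w, ⟨hw, fun i hi => congrFun hweq ⟨i, hi⟩⟩, ?_⟩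
  rintro w' ⟨hw', hfeq⟩
  by_contra hne
  have hagree : ∀ i ∈ S, w' i = w i := fun i hi => by
    rw [hfeq i hi, congrFun hweq ⟨i, hi⟩]
  have := part1 w' hw' w hw hne S hagree
  omega
end

section
/- Let S(d) denote the set of integers n ≥ 2 for which there exists a code C ⊆ (Fin d)^n of size d^(⌊n/2⌋) with pairwise Hamming distance at least ⌈n/2⌉ + 1. If n ∈ S(d) and 2 ≤ m ≤ n, then m ∈ S(d); hence S(d) is a (possibly infinite) downward-closed interval starting at 2. -/
/-- The set of `n` for which a minimal-support-AME code exists. -/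
def AMECodeExists (d n : ℕ) : Prop :=
  ∃ C : Finset (Fin n → Fin d), C.card = d ^ (n / 2) ∧
    ∀ w ∈ C, ∀ w' ∈ C, w ≠ w' → (n + 1) / 2 + 1 ≤ hammingDist w w'

lemma hamming_castSucc {d n : ℕ} (x y : Fin (n + 1) → Fin d) :
    hammingDist x y = hammingDist (x ∘ Fin.castSucc) (y ∘ Fin.castSucc)
      + if x (Fin.last n) ≠ y (Fin.last n) then 1 else 0 := by
  simp only [hammingDist, Finset.card_filter]
  rw [Fin.sum_univ_castSucc]
  rfl

lemma ame_step (d : ℕ) (hd : 2 ≤ d) (n : ℕ) (h : AMECodeExists d (n + 1)) :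
    AMECodeExists d n := by
  obtain ⟨C, hcard, hdist⟩ := h
  rcases Nat.even_or_odd n with ⟨k, hk⟩ | ⟨k, hk⟩
  · -- n = k + k : puncture the last coordinate
    subst hk
    have e1 : (k + k + 1 + 1) / 2 + 1 = k + 2 := by omega
    have e2 : (k + k + 1) / 2 = k := by omega
    have e3 : (k + k) / 2 = k := by omega
    have e4 : (k + k + 1) / 2 + 1 = k + 1 := by omega
    rw [e1] at hdist
    refine ⟨C.image (fun w => w ∘ Fin.castSucc), ?_, ?_⟩
    · rw [Finset.card_image_of_injOn, hcard, e2, e3]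
      intro w hw w' hw' hf
      by_contra hne
      have h1 := hdist w hw w' hw' hne
      have h2 := hamming_castSucc w w'
      have h3 : hammingDist (w ∘ Fin.castSucc) (w' ∘ Fin.castSucc) = 0 := by
        simp only at hf
        rw [hf, hammingDist_self]
      rw [h3] at h2
      split_ifs at h2 <;> omega
    · intro u hu u' hu' hne
      obtain ⟨w, hw, rfl⟩ := Finset.mem_image.1 hu
      obtain ⟨w', hw', rfl⟩ := Finset.mem_image.1 hu'
      have hwne : w ≠ w' := fun heq => hne (by rw [heq])
      have h1 := hdist w hw w' hw' hwne
      have h2 := hamming_castSucc w w'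
      show (k + k + 1) / 2 + 1 ≤ hammingDist (w ∘ Fin.castSucc) (w' ∘ Fin.castSucc)
      rw [e4]
      split_ifs at h2 <;> omega
  · -- n = 2k + 1 : shorten at the last coordinate
    subst hk
    have e1 : (2 * k + 1 + 1 + 1) / 2 + 1 = k + 2 := by omega
    have e2 : (2 * k + 1 + 1) / 2 = k + 1 := by omega
    have e3 : (2 * k + 1) / 2 = k := by omega
    have e4 : (2 * k + 1 + 1) / 2 + 1 = k + 2 := by omega
    rw [e1] at hdist
    rw [e2] at hcard
    -- pigeonhole: some fiber of the last coordinate is large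
    have hdk : 1 ≤ d ^ k := Nat.one_le_pow _ _ (by omega)
    have hlt : (Finset.univ : Finset (Fin d)).card * (d ^ k - 1) < C.card := by
      rw [Finset.card_univ, Fintype.card_fin, hcard]
      have hps : d ^ (k + 1) = d * d ^ k := by ring
      have hmm : d * (d ^ k - 1) < d * d ^ k :=
        Nat.mul_lt_mul_of_pos_left (by omega) (by omega)
      omega
    obtain ⟨a, -, ha⟩ := Finset.exists_lt_card_fiber_of_mul_lt_card_of_maps_to
      (fun w _ => Finset.mem_univ (w (Fin.last (2 * k + 1)))) hlt
    have ha' := Nat.le_of_pred_lt ha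
    obtain ⟨T, hTsub, hTcard⟩ := Finset.exists_subset_card_eq ha'
    have hTC : T ⊆ C := hTsub.trans (Finset.filter_subset _ _)
    have hlast : ∀ w ∈ T, w (Fin.last (2 * k + 1)) = a := fun w hw =>
      (Finset.mem_filter.1 (hTsub hw)).2
    clear ha ha' hTsub hlt
    have hTcard' : T.card = d ^ k := hTcard
    refine ⟨T.image (fun w => w ∘ Fin.castSucc), ?_, ?_⟩
    · rw [Finset.card_image_of_injOn, hTcard', e3]
      intro w hw w' hw' hf
      by_contra hne
      have h1 := hdist w (hTC hw) w' (hTC hw') hne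
      have h2 := hamming_castSucc w w'
      have h3 : hammingDist (w ∘ Fin.castSucc) (w' ∘ Fin.castSucc) = 0 := by
        simp only at hf
        rw [hf, hammingDist_self]
      have h4 : w (Fin.last (2 * k + 1)) = w' (Fin.last (2 * k + 1)) := by
        rw [hlast w hw, hlast w' hw']
      rw [h3, if_neg (by simp [h4])] at h2
      omega
    · intro u hu u' hu' hne
      obtain ⟨w, hw, rfl⟩ := Finset.mem_image.1 hu
      obtain ⟨w', hw', rfl⟩ := Finset.mem_image.1 hu'
      have hwne : w ≠ w' := fun heq => hne (by rw [heq])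
      have h1 := hdist w (hTC hw) w' (hTC hw') hwne
      have h2 := hamming_castSucc w w'
      have h4 : w (Fin.last (2 * k + 1)) = w' (Fin.last (2 * k + 1)) := by
        rw [hlast w hw, hlast w' hw']
      rw [if_neg (by simp [h4])] at h2
      show (2 * k + 1 + 1) / 2 + 1 ≤ hammingDist (w ∘ Fin.castSucc) (w' ∘ Fin.castSucc)
      rw [e4]
      omega

lemma ame_down (d : ℕ) (hd : 2 ≤ d) (m : ℕ) :
    ∀ k, AMECodeExists d (m + k) → AMECodeExists d m := by
  intro k
  induction k with
  | zero => exact id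
  | succ k ih => exact fun h => ih (ame_step d hd (m + k) h)

/-- The set `S(d) = {n ≥ 2 | an AME-type MDS code of length n exists}` is
downward closed: if `n ∈ S(d)` and `2 ≤ m ≤ n` then `m ∈ S(d)`. -/
theorem ame_interval (d : ℕ) (hd : 2 ≤ d) (n m : ℕ) (hn : 2 ≤ n) (hm : 2 ≤ m)
    (hmn : m ≤ n) (h : AMECodeExists d n) : AMECodeExists d m := by
  exact ame_down d hd m (n - m) (by rwa [Nat.add_sub_cancel' hmn])
end

section
/- For every prime power q ≥ 3, with N(q) defined as the largest n such that a code C ⊆ F_q^n of size q^(⌊n/2⌋) with pairwise Hamming distance at least ⌈n/2⌉ + 1 exists, one has q + 1 ≤ N(q) ≤ 2q - 2. -/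
/-!
Both bounds are statements about maximum distance separable (MDS) codes: the condition on `C`
says exactly that `C` has `q ^ k` words, `k = ⌊n/2⌋`, at pairwise distance `≥ n - k + 1`.

Lower bound: the extended Reed–Solomon code, i.e. polynomials of degree `< k` evaluated at
the `q + 1` points of the projective line, is MDS, because a nonzero such polynomial has
fewer than `k` zeros there.

Upper bound: in an MDS code any `k` coordinates determine a codeword, so prescribing `t ≤ k`
coordinates leaves exactly `q ^ (k - t)` codewords. Fix a codeword `c` and a set `T` of
`k - 2` coordinates. For each of the `n - k + 2` coordinates `j ∉ T`, the `q - 1` codewords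
`w ≠ c` agreeing with `c` on `T ∪ {j}` form disjoint families inside the `q ^ 2 - 1`
codewords `w ≠ c` agreeing with `c` on `T`. Hence `(n - k + 2)(q - 1) ≤ q ^ 2 - 1`, i.e.
`n ≤ q + k - 1`, which for `k = ⌊n/2⌋` is `n ≤ 2q - 2`.
-/

open Finset Polynomial

variable {ι κ α : Type*} [Fintype ι] [Fintype κ] [DecidableEq α]

theorem hammingDist_add_card_filter_eq (w w' : ι → α) :
    hammingDist w w' + #{i | w i = w' i} = Fintype.card ι := by
  rw [add_comm, hammingDist, card_filter_add_card_filter_not, card_univ]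

theorem hammingDist_arrowCongr (e : ι ≃ κ) (w w' : ι → α) :
    hammingDist (e.arrowCongr (Equiv.refl α) w) (e.arrowCongr (Equiv.refl α) w') =
      hammingDist w w' := by
  simp only [hammingDist, ← Fintype.card_subtype]
  exact Fintype.card_congr (e.symm.subtypeEquiv fun _ => by simp)

variable [Fintype α]

/-- `C` is maximum distance separable of dimension `k`: it attains the Singleton bound
`d ≤ n - k + 1`. -/
structure IsMDS (C : Finset (ι → α)) (k : ℕ) : Prop where
  card_eq : #C = Fintype.card α ^ k
  card_lt_add_hammingDist :
    ∀ w ∈ C, ∀ w' ∈ C, w ≠ w' → Fintype.card ι < k + hammingDist w w'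

theorem isMDS_half_iff {n : ℕ} {C : Finset (Fin n → α)} :
    IsMDS C (n / 2) ↔ #C = Fintype.card α ^ (n / 2) ∧
      ∀ w ∈ C, ∀ w' ∈ C, w ≠ w' → (n + 1) / 2 + 1 ≤ hammingDist w w' := by
  refine ⟨fun h => ⟨h.card_eq, fun w hw w' hw' hne => ?_⟩,
    fun h => ⟨h.1, fun w hw w' hw' hne => ?_⟩⟩
  · have := h.card_lt_add_hammingDist w hw w' hw' hne
    rw [Fintype.card_fin] at this
    omega
  · have := h.2 w hw w' hw' hne
    rw [Fintype.card_fin]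
    omega

namespace IsMDS

variable {C : Finset (ι → α)} {k : ℕ}

theorem map_arrowCongr (hC : IsMDS C k) (e : ι ≃ κ) :
    IsMDS (C.map (e.arrowCongr (Equiv.refl α)).toEmbedding) k := by
  refine ⟨by rw [card_map, hC.card_eq], fun w hw w' hw' hne => ?_⟩
  rw [mem_map_equiv] at hw hw'
  have := hC.card_lt_add_hammingDist _ hw _ hw' fun h => hne (by simpa using h)
  rwa [← hammingDist_arrowCongr e, Equiv.apply_symm_apply, Equiv.apply_symm_apply,
    Fintype.card_congr e] at this

theorem eq_of_eqOn (hC : IsMDS C k) {w w' : ι → α} (hw : w ∈ C) (hw' : w' ∈ C)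
    {s : Finset ι} (hs : k ≤ #s) (h : ∀ i ∈ s, w i = w' i) : w = w' := by
  by_contra hne
  have hlt := hC.card_lt_add_hammingDist w hw w' hw' hne
  have hsub : s ⊆ ({i | w i = w' i} : Finset ι) := fun i hi =>
    mem_filter.2 ⟨mem_univ _, h i hi⟩
  have := card_le_card hsub
  have := hammingDist_add_card_filter_eq w w'
  omega

theorem card_filter_eqOn_of_card_eq [DecidableEq ι] (hC : IsMDS C k) {s : Finset ι} (hs : #s = k)
    (g : ι → α) : #{w ∈ C | ∀ i ∈ s, w i = g i} = 1 := by
  let restrict : (ι → α) → s → α := fun w i => w i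
  have hinj : Set.InjOn restrict C := fun w hw w' hw' h =>
    hC.eq_of_eqOn hw hw' hs.ge fun i hi => congrFun h ⟨i, hi⟩
  have himage : C.image restrict = univ := eq_univ_of_card _ <| by
    rw [card_image_of_injOn hinj, hC.card_eq, Fintype.card_fun, Fintype.card_coe, hs]
  obtain ⟨w, hw, hwg⟩ := mem_image.1 (himage ▸ mem_univ (restrict g))
  have hwg' : ∀ i ∈ s, w i = g i := fun i hi => congrFun hwg ⟨i, hi⟩
  refine card_eq_one.2 ⟨w, eq_singleton_iff_unique_mem.2 ⟨mem_filter.2 ⟨hw, hwg'⟩, ?_⟩⟩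
  intro w' hw'
  rw [mem_filter] at hw'
  exact hC.eq_of_eqOn hw'.1 hw hs.ge fun i hi => (hw'.2 i hi).trans (hwg' i hi).symm

theorem card_filter_eqOn [DecidableEq ι] (hC : IsMDS C k) (hk : k ≤ Fintype.card ι)
    {t : Finset ι} (ht : #t ≤ k) (g : ι → α) :
    #{w ∈ C | ∀ i ∈ t, w i = g i} = Fintype.card α ^ (k - #t) := by
  obtain ⟨m, hm⟩ : ∃ m, k - #t = m := ⟨_, rfl⟩
  induction m generalizing t g with
  | zero => rw [hm, hC.card_filter_eqOn_of_card_eq (by omega), pow_zero]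
  | succ m ih =>
    obtain ⟨j, hj⟩ : ∃ j, j ∉ t := by
      by_contra! h
      rw [eq_univ_of_forall h, card_univ] at hm
      omega
    have hfiber :
        ∀ a, #{w ∈ {w ∈ C | ∀ i ∈ t, w i = g i} | w j = a} = Fintype.card α ^ m := by
      intro a
      have hm' : k - #(insert j t) = m := by rw [card_insert_of_notMem hj]; omega
      rw [filter_filter, ← hm',
        ← ih (by rw [card_insert_of_notMem hj]; omega) (Function.update g j a) hm']
      refine congrArg card (filter_congr fun w _ => ?_)
      simp only [forall_mem_insert, Function.update_self]
      refine ⟨fun h => ⟨h.2, fun i hi => ?_⟩, fun h => ⟨fun i hi => ?_, h.1⟩⟩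
      · rw [Function.update_of_ne (ne_of_mem_of_not_mem hi hj)]; exact h.1 i hi
      · rw [← Function.update_of_ne (ne_of_mem_of_not_mem hi hj) a g]; exact h.2 i hi
    rw [hm, card_eq_sum_card_fiberwise (f := fun w => w j) (t := univ) fun _ _ => mem_univ _,
      sum_congr rfl fun a _ => hfiber a, sum_const, card_univ, smul_eq_mul, pow_succ']

theorem card_filter_eqOn_erase [DecidableEq ι] (hC : IsMDS C k) (hk : k ≤ Fintype.card ι)
    {t : Finset ι} (ht : #t ≤ k) {c : ι → α} (hc : c ∈ C) :
    #({w ∈ C | ∀ i ∈ t, w i = c i}.erase c) = Fintype.card α ^ (k - #t) - 1 := by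
  rw [card_erase_of_mem (mem_filter.2 ⟨hc, fun _ _ => rfl⟩), hC.card_filter_eqOn hk ht]

theorem card_lt_card_add [Nontrivial α] (hC : IsMDS C k) (hk₂ : 2 ≤ k)
    (hk : k ≤ Fintype.card ι) : Fintype.card ι < Fintype.card α + k := by
  classical
  set q := Fintype.card α
  have hq : 1 < q := Fintype.one_lt_card
  obtain ⟨c, hc⟩ : C.Nonempty := card_pos.1 (by rw [hC.card_eq]; positivity)
  obtain ⟨T, -, hT⟩ := exists_subset_card_eq (s := (univ : Finset ι)) (n := k - 2)
    (by rw [card_univ]; omega)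
  let A : ι → Finset (ι → α) := fun j => {w ∈ C | ∀ i ∈ insert j T, w i = c i}.erase c
  have hA : ∀ j ∈ Tᶜ, #(A j) = q - 1 := by
    intro j hj
    have hj : j ∉ T := mem_compl.1 hj
    rw [hC.card_filter_eqOn_erase hk (by rw [card_insert_of_notMem hj]; omega) hc,
      card_insert_of_notMem hj, hT, show k - (k - 2 + 1) = 1 by omega, pow_one]
  have hdisj : ((Tᶜ : Finset ι) : Set ι).PairwiseDisjoint A := by
    intro j hj j' hj' hne
    refine disjoint_left.2 fun w hwj hwj' => ?_
    simp only [A, mem_erase, mem_filter, forall_mem_insert] at hwj hwj'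
    have hjT : j ∉ insert j' T := by simp_all
    refine hwj.1 (hC.eq_of_eqOn hwj.2.1 hc (s := insert j (insert j' T)) ?_ ?_)
    · rw [card_insert_of_notMem hjT, card_insert_of_notMem (by simpa using hj'), hT]; omega
    · simp only [forall_mem_insert]; exact ⟨hwj.2.2.1, hwj'.2.2⟩
  have hsub : Tᶜ.biUnion A ⊆ {w ∈ C | ∀ i ∈ T, w i = c i}.erase c := by
    intro w hw
    obtain ⟨j, -, hw⟩ := mem_biUnion.1 hw
    simp only [A, mem_erase, mem_filter, forall_mem_insert] at hw ⊢
    exact ⟨hw.1, hw.2.1, hw.2.2.2⟩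
  have hcount : #Tᶜ * (q - 1) ≤ (q + 1) * (q - 1) := calc
    #Tᶜ * (q - 1) = #(Tᶜ.biUnion A) := by
      rw [card_biUnion hdisj, sum_congr rfl hA, sum_const, smul_eq_mul]
    _ ≤ #({w ∈ C | ∀ i ∈ T, w i = c i}.erase c) := card_le_card hsub
    _ = q ^ 2 - 1 := by
      rw [hC.card_filter_eqOn_erase hk (by omega) hc, hT, show k - (k - 2) = 2 by omega]
    _ = (q + 1) * (q - 1) := by rw [← Nat.sq_sub_sq, one_pow]
  have := Nat.le_of_mul_le_mul_right hcount (by omega)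
  rw [card_compl, hT] at this
  omega

end IsMDS

section ReedSolomon

variable {F : Type*} [Field F]

/-- Evaluation at the points of the projective line `Option F`; the point at infinity `none`
reads off the coefficient of `X ^ (k - 1)`, the leading one for a polynomial of degree `< k`. -/
noncomputable def evalProjectiveLine (k : ℕ) : F[X] →ₗ[F] Option F → F :=
  LinearMap.pi fun i => i.elim (lcoeff F (k - 1)) leval

variable [Fintype F] [DecidableEq F]

theorem card_filter_evalProjectiveLine_eq_zero_lt {k : ℕ} {p : F[X]} (hp : p ∈ degreeLT F k)
    (hp0 : p ≠ 0) : #{i | evalProjectiveLine k p i = 0} < k := by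
  have hdeg : p.natDegree < k := (natDegree_lt_iff_degree_lt hp0).2 (mem_degreeLT.1 hp)
  have hroots : #{a | evalProjectiveLine k p (some a) = 0} ≤ p.natDegree :=
    card_le_degree_of_subset_roots fun a ha => by
      rw [mem_roots hp0]
      exact (mem_filter.1 ha).2
  rw [card_filter, Fintype.sum_option, ← card_filter]
  -- If `∞` is a zero of `p`, then `p` has degree `≤ k - 2`.
  by_cases hc : evalProjectiveLine k p none = 0
  · have : p.natDegree ≠ k - 1 := fun h =>
      hp0 (leadingCoeff_eq_zero.1 (by rwa [leadingCoeff, h]))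
    rw [if_pos hc]
    omega
  · rw [if_neg hc]
    omega

theorem exists_isMDS_projectiveLine {k : ℕ} (hk : k ≤ Fintype.card F + 1) :
    ∃ C : Finset (Option F → F), IsMDS C k := by
  let E : (Fin k → F) →ₗ[F] Option F → F :=
    evalProjectiveLine k ∘ₗ (degreeLT F k).subtype ∘ₗ (degreeLTEquiv F k).symm.toLinearMap
  have hE : ∀ v ≠ 0, Fintype.card (Option F) < k + hammingDist (E v) 0 := by
    intro v hv
    let p := (degreeLTEquiv F k).symm v
    have hp0 : (p : F[X]) ≠ 0 := by simpa [p] using hv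
    have := card_filter_evalProjectiveLine_eq_zero_lt p.2 hp0
    have := hammingDist_add_card_filter_eq (evalProjectiveLine k (p : F[X])) 0
    simp only [Pi.zero_apply] at this
    change _ < k + hammingDist (evalProjectiveLine k (p : F[X])) 0
    omega
  have hinj : Function.Injective E := (injective_iff_map_eq_zero E).2 fun v hv => by
    by_contra h
    have := hE v h
    rw [hv, hammingDist_self, Fintype.card_option] at this
    omega
  refine ⟨univ.image E, ?_, ?_⟩
  · rw [card_image_of_injective _ hinj, card_univ, Fintype.card_fun, Fintype.card_fin]
  · simp only [mem_image, mem_univ, true_and]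
    rintro _ ⟨v, rfl⟩ _ ⟨v', rfl⟩ hne
    rw [hammingDist_eq_hammingNorm, neg_add_eq_sub, ← map_sub, ← hammingDist_zero_right]
    exact hE _ (sub_ne_zero.2 fun h => hne (h ▸ rfl))

theorem exists_isMDS_of_card_eq {k : ℕ} (hι : Fintype.card ι = Fintype.card F + 1)
    (hk : k ≤ Fintype.card F + 1) : ∃ C : Finset (ι → F), IsMDS C k := by
  obtain ⟨C, hC⟩ := exists_isMDS_projectiveLine hk
  exact ⟨_, hC.map_arrowCongr (Fintype.equivOfCardEq (by rw [Fintype.card_option, hι]))⟩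

end ReedSolomon

theorem exists_isGreatest_of_mem_of_forall_le {S : Set ℕ} {a b : ℕ} (ha : a ∈ S)
    (hb : ∀ n ∈ S, n ≤ b) : ∃ N, IsGreatest S N ∧ a ≤ N ∧ N ≤ b := by
  obtain ⟨N, hN⟩ := BddAbove.exists_isGreatest_of_nonempty ⟨b, hb⟩ ⟨a, ha⟩
  exact ⟨N, hN, hN.2 ha, hb N hN.1⟩

/-- For a finite field `F` with `q ≥ 3` elements, the largest `n` for which a
code `C ⊆ F^n` of size `q ^ ⌊n/2⌋` with pairwise Hamming distance at least
`⌈n/2⌉ + 1` exists is well defined and satisfies `q + 1 ≤ N(q) ≤ 2q - 2`. -/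
theorem N_bounds (q : ℕ) (F : Type) [Field F] [Fintype F] [DecidableEq F]
    (hF : Fintype.card F = q) (hq : 3 ≤ q) :
    ∃ N : ℕ,
      IsGreatest {n : ℕ | ∃ C : Finset (Fin n → F), C.card = q ^ (n / 2) ∧
        ∀ w ∈ C, ∀ w' ∈ C, w ≠ w' → (n + 1) / 2 + 1 ≤ hammingDist w w'} N ∧
      q + 1 ≤ N ∧ N ≤ 2 * q - 2 := by
  subst hF
  refine exists_isGreatest_of_mem_of_forall_le ?_ fun n ⟨C, hC⟩ => ?_
  · obtain ⟨C, hC⟩ := exists_isMDS_of_card_eq (ι := Fin (Fintype.card F + 1))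
      (k := (Fintype.card F + 1) / 2) (Fintype.card_fin _) (by omega)
    exact ⟨C, isMDS_half_iff.1 hC⟩
  · by_cases hn : n < 4
    · omega
    have := (isMDS_half_iff.2 hC).card_lt_card_add (by omega) (by rw [Fintype.card_fin]; omega)
    rw [Fintype.card_fin] at this
    omega
end

section
/- If a code C ⊆ (Fin d)^n attains the Singleton bound with minimum distance δ and n - δ + 1 ≥ 2, then for any coordinate i and any symbol a ∈ Fin d, the shortened code { w restricted to the other n-1 coordinates | w ∈ C, w i = a } has cardinality d^(n-δ) and pairwise Hamming distance at least δ; hence it is an MDS code of length n - 1 and distance δ. -/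
/-- Shortening an MDS code: if `C ⊆ (Fin d)^(n+1)` attains the Singleton bound
with minimum distance `δ` and `n + 1 - δ + 1 ≥ 2`, then for any coordinate `i`
and symbol `a`, keeping the codewords with `w i = a` and deleting coordinate `i`
yields a code of cardinality `d ^ (n + 1 - δ)` with pairwise distance at least
`δ`; hence an MDS code of length `n` and distance `δ`. -/
theorem mds_shorten (d n δ : ℕ) (hd : 0 < d) (hk : 2 ≤ n + 1 - δ + 1)
    (C : Finset (Fin (n + 1) → Fin d)) (hcard : C.card = d ^ (n + 1 - δ + 1))
    (hdist : ∀ w ∈ C, ∀ w' ∈ C, w ≠ w' → δ ≤ hammingDist w w')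
    (i : Fin (n + 1)) (a : Fin d) :
    ((C.filter (fun w => w i = a)).image (fun w => w ∘ i.succAbove)).card =
      d ^ (n + 1 - δ) ∧
    ∀ w ∈ (C.filter (fun w => w i = a)).image (fun w => w ∘ i.succAbove),
      ∀ w' ∈ (C.filter (fun w => w i = a)).image (fun w => w ∘ i.succAbove),
        w ≠ w' → δ ≤ hammingDist w w' := by
  classical
  -- injectivity of the deletion map on the filtered set
  have hinj2 : Set.InjOn (fun w : Fin (n + 1) → Fin d => w ∘ i.succAbove)
      ↑(C.filter (fun w => w i = a)) := by
    intro w hw w' hw' h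
    simp only [Finset.coe_filter, Set.mem_setOf_eq] at hw hw'
    funext x
    rcases eq_or_ne x i with rfl | hx
    · rw [hw.2, hw'.2]
    · obtain ⟨j, rfl⟩ := Fin.exists_succAbove_eq hx
      exact congrFun h j
  -- the distance claim (second conjunct), given distance of C
  have distEq : ∀ w w' : Fin (n + 1) → Fin d, w i = w' i →
      hammingDist (w ∘ i.succAbove) (w' ∘ i.succAbove) = hammingDist w w' := by
    intro w w' hii
    unfold hammingDist
    apply Finset.card_bij (fun j _ => i.succAbove j)
    · intro j hj
      simp only [Finset.mem_filter, Finset.mem_univ, true_and, Function.comp_apply] at hj ⊢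
      exact hj
    · intro j _ j' _ h
      exact Fin.succAbove_right_injective h
    · intro x hx
      simp only [Finset.mem_filter, Finset.mem_univ, true_and, Function.comp_apply] at hx ⊢
      have hxi : x ≠ i := by rintro rfl; exact hx hii
      obtain ⟨j, rfl⟩ := Fin.exists_succAbove_eq hxi
      exact ⟨j, hx, rfl⟩
  have part2 : ∀ w ∈ (C.filter (fun w => w i = a)).image (fun w => w ∘ i.succAbove),
      ∀ w' ∈ (C.filter (fun w => w i = a)).image (fun w => w ∘ i.succAbove),
        w ≠ w' → δ ≤ hammingDist w w' := by
    intro v hv v' hv' hne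
    obtain ⟨w, hw, rfl⟩ := Finset.mem_image.mp hv
    obtain ⟨w', hw', rfl⟩ := Finset.mem_image.mp hv'
    simp only [Finset.mem_filter] at hw hw'
    have hwne : w ≠ w' := by rintro rfl; exact hne rfl
    rw [distEq w w' (hw.2.trans hw'.2.symm)]
    exact hdist w hw.1 w' hw'.1 hwne
  refine ⟨?_, part2⟩
  rw [Finset.card_image_of_injOn hinj2]
  -- trivial case d = 1
  by_cases hd1 : d = 1
  · subst hd1
    simp only [one_pow]
    rw [Finset.card_eq_one]
    have hCne : C.Nonempty := by
      rw [← Finset.card_pos, hcard]; positivity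
    obtain ⟨w, hw⟩ := hCne
    refine ⟨w, ?_⟩
    apply Finset.eq_singleton_iff_unique_mem.mpr
    constructor
    · exact Finset.mem_filter.mpr ⟨hw, Subsingleton.elim _ _⟩
    · intro x hx
      exact Subsingleton.elim x w
  have hd2 : 2 ≤ d := by omega
  -- δ ≥ 1, else cardinality contradiction
  have hδ1 : 1 ≤ δ := by
    by_contra hδ0
    have hδ0 : δ = 0 := by omega
    subst hδ0
    have h1 := Finset.card_le_univ C
    rw [hcard] at h1
    simp only [Nat.sub_zero, Fintype.card_fun, Fintype.card_fin] at h1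
    have := (Nat.pow_le_pow_iff_right hd2).mp h1
    omega
  have hδn : δ ≤ n := by omega
  have hle : n + 1 - δ ≤ n := by omega
  -- the embedding of n+2-δ coordinates, with 0 ↦ i
  set e : Fin (n + 1 - δ + 1) → Fin (n + 1) :=
    Fin.cons i (fun j => i.succAbove (Fin.castLE hle j)) with he
  have he_inj : Function.Injective e := by
    apply Fin.cons_injective_of_injective
    · rintro ⟨j, hj⟩
      exact (Fin.succAbove_ne i _) hj
    · exact Fin.succAbove_right_injective.comp (Fin.castLE_injective hle)
  have he0 : e 0 = i := rfl
  -- projection to the e-coordinates is injective on C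
  have hΦinj : Set.InjOn (fun w : Fin (n + 1) → Fin d => w ∘ e) ↑C := by
    intro w hw w' hw' h
    by_contra hne
    have hge := hdist w hw w' hw' hne
    have hsub : ({x | w x ≠ w' x} : Finset (Fin (n + 1)))
        ⊆ (Finset.univ.image e)ᶜ := by
      intro x hx
      simp only [Finset.mem_filter, Finset.mem_univ, true_and] at hx
      simp only [Finset.mem_compl, Finset.mem_image, Finset.mem_univ, true_and]
      rintro ⟨j, rfl⟩
      exact hx (congrFun h j)
    have hcle := Finset.card_le_card hsub
    rw [Finset.card_compl, Finset.card_image_of_injective _ he_inj] at hcle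
    simp only [Finset.card_univ, Fintype.card_fin] at hcle
    have : hammingDist w w' ≤ n + 1 - (n + 1 - δ + 1) := hcle
    unfold hammingDist at hge
    omega
  -- the projection image is everything
  have himg : C.image (fun w => w ∘ e) = Finset.univ := by
    apply Finset.eq_univ_of_card
    rw [Finset.card_image_of_injOn hΦinj, hcard]
    simp [Fintype.card_fun]
  -- count the filtered set
  have hfcard : (C.filter (fun w => w i = a)).card
      = (Finset.univ.filter (fun v : Fin (n + 1 - δ + 1) → Fin d => v 0 = a)).card := by
    apply Finset.card_bij (fun w _ => w ∘ e)
    · intro w hw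
      simp only [Finset.mem_filter, Finset.mem_univ, true_and] at hw ⊢
      rw [Function.comp_apply, he0]
      exact hw.2
    · intro w hw w' hw' h
      exact hΦinj (Finset.mem_filter.mp hw).1 (Finset.mem_filter.mp hw').1 h
    · intro v hv
      simp only [Finset.mem_filter, Finset.mem_univ, true_and] at hv
      have : v ∈ C.image (fun w => w ∘ e) := himg ▸ Finset.mem_univ v
      obtain ⟨w, hw, rfl⟩ := Finset.mem_image.mp this
      refine ⟨w, Finset.mem_filter.mpr ⟨hw, ?_⟩, rfl⟩
      rw [← he0]; exact hv
  rw [hfcard]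
  -- count the tuples with first entry a
  have : (Finset.univ.filter (fun v : Fin (n + 1 - δ + 1) → Fin d => v 0 = a)).card
      = (Finset.univ : Finset (Fin (n + 1 - δ) → Fin d)).card := by
    apply Finset.card_bij (fun v _ => Fin.tail v)
    · intro v _; exact Finset.mem_univ _
    · intro v hv v' hv' h
      simp only [Finset.mem_filter, Finset.mem_univ, true_and] at hv hv'
      calc v = Fin.cons (v 0) (Fin.tail v) := (Fin.cons_self_tail v).symm
        _ = Fin.cons (v' 0) (Fin.tail v') := by rw [hv, hv', h]
        _ = v' := Fin.cons_self_tail v'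
    · intro t _
      refine ⟨Fin.cons a t, ?_, ?_⟩
      · simp [Fin.cons_zero]
      · simp [Fin.tail_cons]
  rw [this]
  simp [Fintype.card_fun]
end
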